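/- arXiv:0704.2890 — 3 statements merged into one kernel-verified Lean document; each statement's English description precedes it below -/
import Mathlib

section
/- The Gauss norm on the quantum affinoid algebra k{T₁,...,Tₙ}_{q,r}, defined by |∑ a_l T^l| = max_l |a_l| r^l, is multiplicative: |fg| = |f||g| for all f, g. -/
open scoped NNReal ENNReal

namespace QuantumAffinoid

variable {k : Type*} [NontriviallyNormedField k] {n : ℕ}

/-- The weight `r^l = ∏ rᵢ^{lᵢ}` of a monomial exponent `l`. -/
noncomputable def weight (r : Fin n → ℝ≥0) (l : Fin n → ℕ) : ℝ≥0 :=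
  ∏ i, r i ^ l i

/-- The convergence condition defining the quantum affinoid algebra `k{T}_{q,r}`:
`max |a_l| r^l → 0` as `|l| → ∞`. -/
def IsConvergent (r : Fin n → ℝ≥0) (a : (Fin n → ℕ) → k) : Prop :=
  Filter.Tendsto (fun l => ‖a l‖₊ * weight r l) Filter.cofinite (nhds 0)

/-- The Gauss norm `|∑ a_l T^l| = max_l |a_l| r^l` (as a supremum in `ℝ≥0∞`). -/
noncomputable def gaussNorm (r : Fin n → ℝ≥0) (a : (Fin n → ℕ) → k) : ℝ≥0∞ :=
  ⨆ l : Fin n → ℕ, (‖a l‖₊ * weight r l : ℝ≥0)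

/-- The number of elementary transpositions needed to normally order `T^u T^v`,
coming from the relations `TᵢTⱼ = q TⱼTᵢ` for `j < i`. -/
def twist (u v : Fin n → ℕ) : ℕ :=
  ∑ p : Fin n × Fin n, if p.2 < p.1 then u p.1 * v p.2 else 0

/-- The product of two series in the quantum affinoid algebra `k{T}_{q,r}`, written in
normally ordered form using `TᵢTⱼ = q TⱼTᵢ` for `j < i`. -/
noncomputable def mul (q : k) (a b : (Fin n → ℕ) → k) : (Fin n → ℕ) → k :=
  fun l => ∑ u ∈ Finset.Iic l, q ^ twist u (l - u) * a u * b (l - u)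

/-!
The norm on `k` is ultrametric and `|q| = 1`, so the coefficient of `T^l` in `fg` has norm at most
`max_{u + v = l} |a_u| |b_v|`, which gives `|fg| ≤ |f| |g|`. For the converse, the convergence
condition makes `|a_u| r^u` and `|b_v| r^v` attain their maxima; take the lexicographically least
maximisers `u₀` and `v₀`. If `u + v = u₀ + v₀` and `u ≠ u₀`, then `u < u₀` or `v < v₀`
lexicographically, so `|a_u b_v| r^{u+v}` is strictly smaller than `|a_{u₀} b_{v₀}| r^{u₀+v₀}`.
Hence the term `(u₀, v₀)` strictly dominates the coefficient of `T^{u₀+v₀}` in `fg`, whose weighted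
norm is therefore `|f| |g|`.
-/

open scoped NNReal ENNReal
open Filter Topology

theorem _root_.IsUltrametricDist.nnnorm_sum_eq_of_forall_lt {ι M : Type*}
    [SeminormedAddCommGroup M] [IsUltrametricDist M] {s : Finset ι} {f : ι → M} {i : ι}
    (hi : i ∈ s) (h : ∀ j ∈ s, j ≠ i → ‖f j‖₊ < ‖f i‖₊) :
    ‖∑ j ∈ s, f j‖₊ = ‖f i‖₊ := by
  classical
  have h' : ∀ j ∈ s.erase i, ‖f j‖₊ < ‖f i‖₊ := fun j hj =>
    h j (Finset.mem_of_mem_erase hj) (Finset.ne_of_mem_erase hj)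
  rw [← Finset.add_sum_erase s f hi]
  rcases (s.erase i).eq_empty_or_nonempty with hs | ⟨j, hj⟩
  · simp [hs]
  have hrest : ‖∑ j ∈ s.erase i, f j‖₊ < ‖f i‖₊ :=
    ((s.erase i).nnnorm_sum_le_sup_nnnorm f).trans_lt <|
      (Finset.sup_lt_iff (zero_le.trans_lt (h' j hj))).2 h'
  rw [IsUltrametricDist.nnnorm_add_eq_max_of_nnnorm_ne_nnnorm hrest.ne', max_eq_left hrest.le]

def IsLeastArgmax {ι β : Type*} [LinearOrder ι] [Preorder β] (f : ι → β) (i : ι) : Prop :=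
  (∀ j, f j ≤ f i) ∧ ∀ j < i, f j < f i

theorem exists_isLeastArgmax {ι : Type*} [LinearOrder ι] {f : ι → ℝ≥0}
    (hf : Tendsto f cofinite (𝓝 0)) (hf0 : ∃ i, f i ≠ 0) : ∃ i, IsLeastArgmax f i ∧ 0 < f i := by
  obtain ⟨i₁, hi₁⟩ := hf0
  have hfin : {j | f i₁ ≤ f j}.Finite :=
    (mem_cofinite.mp (hf (Iio_mem_nhds (pos_iff_ne_zero.2 hi₁)))).subset
      fun j (hj : f i₁ ≤ f j) => not_lt.2 hj
  have hi₁S : i₁ ∈ {j | f i₁ ≤ f j} := le_refl (f i₁)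
  obtain ⟨m, -, hm⟩ := Set.exists_max_image _ f hfin ⟨i₁, hi₁S⟩
  have hle : ∀ j, f j ≤ f m := fun j =>
    (le_total (f i₁) (f j)).elim (hm j) fun h => h.trans (hm i₁ hi₁S)
  obtain ⟨i, hi, hmin⟩ := Set.exists_min_image {j | f j = f m} id
    (hfin.subset fun j hj => (hm i₁ hi₁S).trans_eq hj.symm) ⟨m, rfl⟩
  have hi : f i = f m := hi
  refine ⟨i, ⟨fun j => hi ▸ hle j, fun j hj => ?_⟩, ?_⟩
  · exact (hi ▸ hle j).lt_of_ne fun h => (hmin j (h.trans hi)).not_gt hj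
  · exact (pos_iff_ne_zero.2 hi₁).trans_le (hi ▸ hle i₁)

theorem IsLeastArgmax.mul_lt_mul {ι : Type*} [AddCommMonoid ι] [LinearOrder ι]
    [IsOrderedCancelAddMonoid ι] {f g : ι → ℝ≥0} {i j u v : ι} (hf : IsLeastArgmax f i)
    (hg : IsLeastArgmax g j) (hfi : 0 < f i) (hgj : 0 < g j) (huv : u + v = i + j)
    (hui : u ≠ i) : f u * g v < f i * g j := by
  rcases hui.lt_or_gt with hui | hiu
  · calc f u * g v ≤ f u * g j := by gcongr; exact hg.1 v
      _ < f i * g j := mul_lt_mul_of_pos_right (hf.2 u hui) hgj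
  · have hvj : v < j := lt_of_not_ge fun hjv => (add_lt_add_of_lt_of_le hiu hjv).ne huv.symm
    calc f u * g v ≤ f i * g v := by gcongr; exact hf.1 u
      _ < f i * g j := mul_lt_mul_of_pos_left (hg.2 v hvj) hfi

section Weights

variable (r : Fin n → ℝ≥0)

theorem weight_add (u v : Fin n → ℕ) : weight r (u + v) = weight r u * weight r v := by
  simp [weight, pow_add, Finset.prod_mul_distrib]

theorem weight_eq_mul_weight_sub {u l : Fin n → ℕ} (h : u ≤ l) :
    weight r l = weight r u * weight r (l - u) := by
  rw [← weight_add, add_tsub_cancel_of_le h]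

noncomputable def termNorm (a : (Fin n → ℕ) → k) (l : Fin n → ℕ) : ℝ≥0 :=
  ‖a l‖₊ * weight r l

theorem gaussNorm_eq_iSup_termNorm (a : (Fin n → ℕ) → k) :
    gaussNorm r a = ⨆ l, (termNorm r a l : ℝ≥0∞) :=
  rfl

theorem termNorm_le_gaussNorm (a : (Fin n → ℕ) → k) (l : Fin n → ℕ) :
    (termNorm r a l : ℝ≥0∞) ≤ gaussNorm r a :=
  le_iSup (fun l => (termNorm r a l : ℝ≥0∞)) l

theorem gaussNorm_eq_termNorm {a : (Fin n → ℕ) → k} {l₀ : Fin n → ℕ}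
    (h : ∀ l, termNorm r a l ≤ termNorm r a l₀) : gaussNorm r a = termNorm r a l₀ :=
  le_antisymm (iSup_le fun l => ENNReal.coe_le_coe.2 (h l)) (termNorm_le_gaussNorm r a l₀)

theorem nnnorm_mulTerm_mul_weight (q : k) (a b : (Fin n → ℕ) → k) {u l : Fin n → ℕ}
    (h : u ≤ l) :
    ‖q ^ twist u (l - u) * a u * b (l - u)‖₊ * weight r l =
      ‖q‖₊ ^ twist u (l - u) * (termNorm r a u * termNorm r b (l - u)) := by
  rw [nnnorm_mul, nnnorm_mul, nnnorm_pow, weight_eq_mul_weight_sub r h, termNorm, termNorm]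
  ring

end Weights

section Ultrametric

variable [IsUltrametricDist k] {q : k} {r : Fin n → ℝ≥0}

theorem termNorm_mul_le (hq : ‖q‖ ≤ 1) (a b : (Fin n → ℕ) → k) (l : Fin n → ℕ) :
    (termNorm r (mul q a b) l : ℝ≥0∞) ≤ gaussNorm r a * gaussNorm r b := by
  have hq : ‖q‖₊ ≤ 1 := hq
  calc (termNorm r (mul q a b) l : ℝ≥0∞)
      ≤ ((Finset.Iic l).sup fun u => ‖q ^ twist u (l - u) * a u * b (l - u)‖₊ * weight r l :) := by
        rw [termNorm, mul, ← NNReal.finset_sup_mul]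
        gcongr
        exact Finset.nnnorm_sum_le_sup_nnnorm _ _
    _ ≤ gaussNorm r a * gaussNorm r b := by
        rw [ENNReal.coe_finset_sup]
        refine Finset.sup_le fun u hu => ?_
        rw [nnnorm_mulTerm_mul_weight r q a b (Finset.mem_Iic.1 hu)]
        calc ((‖q‖₊ ^ twist u (l - u) * (termNorm r a u * termNorm r b (l - u)) : ℝ≥0) : ℝ≥0∞)
            ≤ (termNorm r a u : ℝ≥0∞) * termNorm r b (l - u) := by
              rw [← ENNReal.coe_mul, ENNReal.coe_le_coe]
              exact mul_le_of_le_one_left zero_le (pow_le_one₀ zero_le hq)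
          _ ≤ gaussNorm r a * gaussNorm r b :=
              mul_le_mul' (termNorm_le_gaussNorm r a u) (termNorm_le_gaussNorm r b (l - u))

theorem gaussNorm_mul_le (hq : ‖q‖ ≤ 1) (a b : (Fin n → ℕ) → k) :
    gaussNorm r (mul q a b) ≤ gaussNorm r a * gaussNorm r b :=
  iSup_le (termNorm_mul_le hq a b)

theorem termNorm_mul_add_of_isLeastArgmax (hq : ‖q‖ = 1) {a b : (Fin n → ℕ) → k}
    {u₀ v₀ : Lex (Fin n → ℕ)} (ha : IsLeastArgmax (termNorm r a ∘ ofLex) u₀)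
    (hb : IsLeastArgmax (termNorm r b ∘ ofLex) v₀) (ha0 : 0 < termNorm r a (ofLex u₀))
    (hb0 : 0 < termNorm r b (ofLex v₀)) :
    termNorm r (mul q a b) (ofLex (u₀ + v₀)) =
      termNorm r a (ofLex u₀) * termNorm r b (ofLex v₀) := by
  set l := ofLex (u₀ + v₀)
  have hq : ‖q‖₊ = 1 := NNReal.coe_injective hq
  have hterm : ∀ u ≤ l, ‖q ^ twist u (l - u) * a u * b (l - u)‖₊ * weight r l =
      termNorm r a u * termNorm r b (l - u) := fun u hu => by
    rw [nnnorm_mulTerm_mul_weight r q a b hu, hq, one_pow, one_mul]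
  have hu₀ : ofLex u₀ ≤ l := le_self_add
  have hsub : l - ofLex u₀ = ofLex v₀ := add_tsub_cancel_left _ _
  have hw : 0 < weight r l := by
    rw [show l = ofLex u₀ + ofLex v₀ from rfl, weight_add]
    exact mul_pos (pos_of_mul_pos_right ha0 zero_le) (pos_of_mul_pos_right hb0 zero_le)
  have hdom : ∀ u ∈ Finset.Iic l, u ≠ ofLex u₀ → ‖q ^ twist u (l - u) * a u * b (l - u)‖₊ <
      ‖q ^ twist (ofLex u₀) (l - ofLex u₀) * a (ofLex u₀) * b (l - ofLex u₀)‖₊ := by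
    intro u hu hne
    rw [Finset.mem_Iic] at hu
    refine lt_of_mul_lt_mul_right ?_ hw.le
    rw [hterm u hu, hterm _ hu₀, hsub]
    exact ha.mul_lt_mul (u := toLex u) (v := toLex (l - u)) hb ha0 hb0
      (congrArg toLex (add_tsub_cancel_of_le hu)) hne
  rw [termNorm, mul, IsUltrametricDist.nnnorm_sum_eq_of_forall_lt (Finset.mem_Iic.2 hu₀) hdom,
    hterm _ hu₀, hsub]

theorem le_gaussNorm_mul (hq : ‖q‖ = 1) {a b : (Fin n → ℕ) → k} (ha : IsConvergent r a)
    (hb : IsConvergent r b) : gaussNorm r a * gaussNorm r b ≤ gaussNorm r (mul q a b) := by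
  by_cases ha0 : ∀ l, termNorm r a l = 0
  · simp [gaussNorm_eq_iSup_termNorm r a, ha0]
  by_cases hb0 : ∀ l, termNorm r b l = 0
  · simp [gaussNorm_eq_iSup_termNorm r b, hb0]
  simp only [not_forall] at ha0 hb0
  obtain ⟨u₀, hu₀, hu₀pos⟩ := exists_isLeastArgmax (f := termNorm r a ∘ ofLex) ha ha0
  obtain ⟨v₀, hv₀, hv₀pos⟩ := exists_isLeastArgmax (f := termNorm r b ∘ ofLex) hb hb0
  rw [gaussNorm_eq_termNorm r fun l => hu₀.1 (toLex l),
    gaussNorm_eq_termNorm r fun l => hv₀.1 (toLex l), ← ENNReal.coe_mul,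
    ← termNorm_mul_add_of_isLeastArgmax hq hu₀ hv₀ hu₀pos hv₀pos]
  exact termNorm_le_gaussNorm r _ _

end Ultrametric

theorem gaussNorm_mul_general
    (hna : ∀ x y : k, ‖x + y‖ ≤ max ‖x‖ ‖y‖)
    (q : k) (hq : ‖q‖ = 1)
    (r : Fin n → ℝ≥0)
    (a b : (Fin n → ℕ) → k)
    (ha : IsConvergent r a) (hb : IsConvergent r b) :
    gaussNorm r (mul q a b) = gaussNorm r a * gaussNorm r b := by
  have : IsUltrametricDist k :=
    IsUltrametricDist.isUltrametricDist_of_forall_norm_add_le_max_norm hna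
  exact le_antisymm (gaussNorm_mul_le hq.le a b) (le_gaussNorm_mul hq ha hb)

/-- The Gauss norm on the quantum affinoid algebra `k{T₁,...,Tₙ}_{q,r}` is
multiplicative: `|fg| = |f| |g|`. -/
theorem gaussNorm_mul
    (hna : ∀ x y : k, ‖x + y‖ ≤ max ‖x‖ ‖y‖)
    (q : k) (hq : ‖q‖ = 1)
    (r : Fin n → ℝ≥0) (hr : ∀ i, 0 < r i)
    (a b : (Fin n → ℕ) → k)
    (ha : IsConvergent r a) (hb : IsConvergent r b) :
    gaussNorm r (mul q a b) = gaussNorm r a * gaussNorm r b :=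
  gaussNorm_mul_general hna q hq r a b ha hb

end QuantumAffinoid
end

section
/- Let V_r be the space of two-sided series ∑_{i∈ℤ} a_i T^i with |a_i| r^i → 0 as |i| → ∞. Define operators on V_r: α = multiplication by T, τ(f)(T) = f(qT), γ = -τ^{-1}, and β = T^{-1}∘(1 - τ). Then these operators satisfy the relations αγ = qγα, qβγ = γβ, βα - qαβ = (1-q)·id, and (αβ - 1)γ = id. -/
namespace QuantumVr

variable {k : Type*} [NormedField k]

/-- The membership condition for the Banach space `V_r` of two-sided series
`∑_{i∈ℤ} aᵢ Tⁱ` with `|aᵢ| rⁱ → 0` as `|i| → ∞`, viewed on coefficient sequences. -/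
def MemVr (r : ℝ) (a : ℤ → k) : Prop :=
  Filter.Tendsto (fun i : ℤ => ‖a i‖ * r ^ i) Filter.cofinite (nhds 0)

/-- The operator `α` of multiplication by `T`. -/
def alphaOp : (ℤ → k) →ₗ[k] (ℤ → k) where
  toFun a := fun i => a (i - 1)
  map_add' _ _ := rfl
  map_smul' _ _ := rfl

/-- The shift operator `τ`, `τ(f)(T) = f(qT)`, i.e. `aᵢ ↦ qⁱ aᵢ`. -/
def tauOp (q : kˣ) : (ℤ → k) →ₗ[k] (ℤ → k) where
  toFun a := fun i => ((q ^ i : kˣ) : k) * a i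
  map_add' a b := by funext i; simp [mul_add]
  map_smul' c a := by funext i; simp [mul_comm, mul_left_comm]; ring

/-- The operator `γ = -τ⁻¹`, i.e. `aᵢ ↦ -q⁻ⁱ aᵢ`. -/
def gammaOp (q : kˣ) : (ℤ → k) →ₗ[k] (ℤ → k) where
  toFun a := fun i => -(((q ^ (-i) : kˣ) : k) * a i)
  map_add' a b := by funext i; simp [mul_add]; ring
  map_smul' c a := by funext i; simp [mul_comm, mul_left_comm]; ring

/-- The operator `β = T⁻¹ ∘ (1 - τ)`, i.e. `(βa)ᵢ = (1 - q^{i+1}) a_{i+1}`. -/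
def betaOp (q : kˣ) : (ℤ → k) →ₗ[k] (ℤ → k) where
  toFun a := fun i => (1 - ((q ^ (i + 1) : kˣ) : k)) * a (i + 1)
  map_add' a b := by funext i; simp [mul_add]
  map_smul' c a := by funext i; simp [mul_comm, mul_left_comm]; ring

/-- The operators `α` (multiplication by `T`), `τ(f)(T) = f(qT)`, `γ = -τ⁻¹` and
`β = T⁻¹∘(1-τ)` preserve `V_r` and satisfy the relations `αγ = qγα`, `qβγ = γβ`,
`βα - qαβ = (1-q)·id`, `(αβ - 1)γ = id` of the algebra `A_q(S)`. -/
theorem AqS_representation_on_Vr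
    (hna : ∀ x y : k, ‖x + y‖ ≤ max ‖x‖ ‖y‖)
    (q : kˣ) (hq : ‖(q : k)‖ = 1) (r : ℝ) (hr : 0 < r) :
    (alphaOp.comp (gammaOp q) = (q : k) • ((gammaOp q).comp alphaOp)) ∧
    ((q : k) • ((betaOp q).comp (gammaOp q)) = (gammaOp q).comp (betaOp q)) ∧
    ((betaOp q).comp alphaOp - (q : k) • (alphaOp.comp (betaOp q))
        = (1 - (q : k)) • (LinearMap.id : (ℤ → k) →ₗ[k] (ℤ → k))) ∧
    ((alphaOp.comp (betaOp q) - LinearMap.id).comp (gammaOp q)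
        = (LinearMap.id : (ℤ → k) →ₗ[k] (ℤ → k))) ∧
    (∀ a : ℤ → k, MemVr r a →
      MemVr r (alphaOp a) ∧ MemVr r (tauOp q a) ∧ MemVr r (gammaOp q a) ∧
        MemVr r (betaOp q a)) := by
  have hq0 : (q : k) ≠ 0 := q.ne_zero
  have hqn : ∀ n : ℤ, ‖((q ^ n : kˣ) : k)‖ = 1 := fun n => by
    rw [Units.val_zpow_eq_zpow_val, norm_zpow, hq, one_zpow]
  refine ⟨?_, ?_, ?_, ?_, ?_⟩
  · ext a i
    simp only [LinearMap.comp_apply, LinearMap.smul_apply, Pi.smul_apply, alphaOp, gammaOp,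
      LinearMap.coe_mk, AddHom.coe_mk, smul_eq_mul, Units.val_zpow_eq_zpow_val]
    have h : (q : k) ^ (-(i - 1)) = (q : k) * (q : k) ^ (-i) := by
      rw [show -(i - 1) = 1 + -i by ring, zpow_add₀ hq0, zpow_one]
    rw [h]; ring
  · ext a i
    simp only [LinearMap.comp_apply, LinearMap.smul_apply, Pi.smul_apply, betaOp, gammaOp,
      LinearMap.coe_mk, AddHom.coe_mk, smul_eq_mul, Units.val_zpow_eq_zpow_val]
    have h : (q : k) * (q : k) ^ (-(i + 1)) = (q : k) ^ (-i) := by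
      rw [show -i = 1 + -(i + 1) by ring, zpow_add₀ hq0, zpow_one]
    rw [← h]; ring
  · ext a i
    simp only [LinearMap.sub_apply, LinearMap.comp_apply, LinearMap.smul_apply, Pi.smul_apply,
      betaOp, alphaOp, LinearMap.coe_mk, AddHom.coe_mk, smul_eq_mul, LinearMap.id_apply, Pi.sub_apply, Pi.smul_apply,
      Units.val_zpow_eq_zpow_val, add_sub_cancel_right, sub_add_cancel]
    have h : (q : k) ^ (i + 1) = (q : k) * (q : k) ^ i := by
      rw [show i + 1 = 1 + i by ring, zpow_add₀ hq0, zpow_one]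
    rw [h]; ring
  · ext a i
    simp only [LinearMap.comp_apply, LinearMap.sub_apply, betaOp, alphaOp, gammaOp,
      LinearMap.coe_mk, AddHom.coe_mk, LinearMap.id_apply, Pi.sub_apply, Units.val_zpow_eq_zpow_val,
      sub_add_cancel]
    have h : (q : k) ^ i * (q : k) ^ (-i) = 1 := by
      rw [← zpow_add₀ hq0]; simp
    linear_combination (a i) * h
  · intro a ha
    have key : ∀ (c : ℤ) (b : ℤ → k), (∀ i, ‖b i‖ ≤ ‖a (i + c)‖) →
        Filter.Tendsto (fun i : ℤ => ‖b i‖ * r ^ i) Filter.cofinite (nhds 0) := by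
      intro c b hb
      have hinj : Function.Injective (fun i : ℤ => i + c) := fun x y h => by
        simpa using h
      have h1 : Filter.Tendsto (fun i : ℤ => ‖a (i + c)‖ * r ^ (i + c) * r ^ (-c))
          Filter.cofinite (nhds 0) := by
        have := (ha.comp hinj.tendsto_cofinite).mul_const (r ^ (-c))
        simpa using this
      have h1' : Filter.Tendsto (fun i : ℤ => ‖a (i + c)‖ * r ^ i)
          Filter.cofinite (nhds 0) := by
        refine h1.congr fun i => ?_
        rw [mul_assoc, ← zpow_add₀ hr.ne', ]
        ring_nf
      refine squeeze_zero (fun i => by positivity) (fun i => ?_) h1'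
      exact mul_le_mul_of_nonneg_right (hb i) (zpow_nonneg hr.le i)
    refine ⟨?_, ?_, ?_, ?_⟩
    · exact key (-1) _ fun i => le_of_eq (by simp [alphaOp, sub_eq_add_neg])
    · exact key 0 _ fun i => le_of_eq (by simp [tauOp, hq, one_zpow])
    · exact key 0 _ fun i => le_of_eq (by simp [gammaOp, hq, one_zpow, inv_one])
    · refine key 1 _ fun i => ?_
      simp only [betaOp, LinearMap.coe_mk, AddHom.coe_mk, norm_mul]
      have h1 : ‖(1 : k) - ((q ^ (i + 1) : kˣ) : k)‖ ≤ 1 := by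
        have h2 := hna 1 (-((q ^ (i + 1) : kˣ) : k))
        rw [norm_neg, hqn (i + 1), norm_one, max_self, ← sub_eq_add_neg] at h2
        exact h2
      calc ‖(1 : k) - ((q ^ (i + 1) : kˣ) : k)‖ * ‖a (i + 1)‖
          ≤ 1 * ‖a (i + 1)‖ := mul_le_mul_of_nonneg_right h1 (norm_nonneg _)
        _ = ‖a (i + 1)‖ := one_mul _

end QuantumVr
end

section
/- In the algebra B_q(S) generated by α, β, γ with relations αγ = qγα, qβγ = γβ, βα - qαβ = 1 - q, the element δ = (αβ - 1)γ is central. -/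
/-!
Put `u = αβ - 1`, so that `δ = uγ`. The relations give `uα = q αu`, `βu = q uβ` and
`γu = uγ`, while `γα = q⁻¹ αγ` and `γβ = q βγ`. Moving `γ` past a generator costs the
inverse of the factor `u` picks up, so `δ = uγ` commutes with `α`, `β` and `γ`, hence with
the whole algebra they generate.
-/

namespace BqS

variable {k A : Type*} [Field k] [Ring A] [Algebra k A] {q : k} {α β γ : A}

theorem beta_mul_alpha (h3 : β * α - q • (α * β) = (1 - q) • (1 : A)) :
    β * α = q • (α * β) + (1 - q) • (1 : A) := by
  rw [← h3, add_sub_cancel]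

theorem alpha_mul_beta_sub_one_mul_alpha (h3 : β * α - q • (α * β) = (1 - q) • (1 : A)) :
    (α * β - 1) * α = q • (α * (α * β - 1)) := by
  calc (α * β - 1) * α = α * (β * α) - α := by noncomm_ring
    _ = q • (α * (α * β - 1)) := by
      rw [beta_mul_alpha h3]
      simp only [mul_add, mul_smul_comm, mul_one, mul_sub, smul_sub, sub_smul, one_smul]
      abel

theorem beta_mul_alpha_mul_beta_sub_one (h3 : β * α - q • (α * β) = (1 - q) • (1 : A)) :
    β * (α * β - 1) = q • ((α * β - 1) * β) := by
  calc β * (α * β - 1) = (β * α) * β - β := by noncomm_ring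
    _ = q • ((α * β - 1) * β) := by
      rw [beta_mul_alpha h3]
      simp only [add_mul, smul_mul_assoc, one_mul, sub_mul, smul_sub, sub_smul, one_smul]
      abel

theorem gamma_mul_alpha (hq : q ≠ 0) (h1 : α * γ = q • (γ * α)) :
    γ * α = q⁻¹ • (α * γ) := by
  rw [h1, smul_smul, inv_mul_cancel₀ hq, one_smul]

theorem commute_gamma_alpha_mul_beta (hq : q ≠ 0) (h1 : α * γ = q • (γ * α))
    (h2 : q • (β * γ) = γ * β) : Commute γ (α * β) := by
  calc γ * (α * β) = q⁻¹ • (α * (γ * β)) := by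
        rw [← mul_assoc, gamma_mul_alpha hq h1, smul_mul_assoc, mul_assoc]
    _ = α * β * γ := by
        rw [← h2, mul_smul_comm, smul_smul, inv_mul_cancel₀ hq, one_smul, mul_assoc]

theorem commute_delta_alpha (hq : q ≠ 0) (h1 : α * γ = q • (γ * α))
    (h3 : β * α - q • (α * β) = (1 - q) • (1 : A)) : Commute ((α * β - 1) * γ) α := by
  calc (α * β - 1) * γ * α = q⁻¹ • ((α * β - 1) * α * γ) := by
        rw [mul_assoc, gamma_mul_alpha hq h1, mul_smul_comm, mul_assoc]
    _ = α * ((α * β - 1) * γ) := by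
        rw [alpha_mul_beta_sub_one_mul_alpha h3, smul_mul_assoc, smul_smul,
          inv_mul_cancel₀ hq, one_smul, mul_assoc]

theorem commute_delta_beta (h2 : q • (β * γ) = γ * β)
    (h3 : β * α - q • (α * β) = (1 - q) • (1 : A)) : Commute ((α * β - 1) * γ) β := by
  calc (α * β - 1) * γ * β = q • ((α * β - 1) * β) * γ := by
        rw [mul_assoc, ← h2, mul_smul_comm, smul_mul_assoc, mul_assoc]
    _ = β * ((α * β - 1) * γ) := by
        rw [← beta_mul_alpha_mul_beta_sub_one h3, mul_assoc]

theorem commute_delta_gamma (hq : q ≠ 0) (h1 : α * γ = q • (γ * α))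
    (h2 : q • (β * γ) = γ * β) : Commute ((α * β - 1) * γ) γ :=
  (((commute_gamma_alpha_mul_beta hq h1 h2).sub_right (Commute.one_right γ)).mul_right
    (Commute.refl γ)).symm

end BqS

/-- In the algebra `B_q(S)` generated by `α, β, γ` with relations `αγ = qγα`,
`qβγ = γβ`, `βα - qαβ = (1-q)·1`, the element `δ = (αβ - 1)γ` is central. -/
theorem BqS_delta_central
    (k : Type*) [Field k] (A : Type*) [Ring A] [Algebra k A]
    (q : k) (hq : q ≠ 0) (α β γ : A)
    (h1 : α * γ = q • (γ * α))
    (h2 : q • (β * γ) = γ * β)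
    (h3 : β * α - q • (α * β) = (1 - q) • (1 : A)) :
    ∀ x ∈ Algebra.adjoin k ({α, β, γ} : Set A),
      ((α * β - 1) * γ) * x = x * ((α * β - 1) * γ) := by
  intro x hx
  refine Algebra.commute_of_mem_adjoin_of_forall_mem_commute hx ?_
  rintro y (rfl | rfl | rfl)
  · exact BqS.commute_delta_alpha hq h1 h3
  · exact BqS.commute_delta_beta h2 h3
  · exact BqS.commute_delta_gamma hq h1 h2
end
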